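/- Let R be a finite additive split semiring and let (!, p, d, c, w, c̄, w̄) be an R-graded additive bialgebra modality on an additive symmetric monoidal category L with finite biproducts and zero object. Let χ⊗_r and χI be the induced graded Seely isomorphisms (χ⊗_r := Σ_{s+t=r} c_{s,t};(!_s(π₀)⊗!_t(π₁));ι_{s,t} and χI := w). Then applying the converse construction to these isomorphisms recovers the original structure: ι_{r,s} ; (χ⊗_{r+s})⁻¹ ; !_{r+s}(∇) = c̄_{r,s} and (χI)⁻¹ ; !_0(0) = w̄. -/

import Mathlib

open CategoryTheory MonoidalCategory Limits

universe v u

/-- An additive symmetric monoidal category: homs are commutative monoids and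
composition and the monoidal product preserve sums and zero maps. -/
class AdditiveMonoidal (C : Type u) [Category.{v} C] [MonoidalCategory C]
    [∀ X Y : C, AddCommMonoid (X ⟶ Y)] : Prop where
  add_comp : ∀ {X Y Z : C} (f g : X ⟶ Y) (h : Y ⟶ Z), (f + g) ≫ h = f ≫ h + g ≫ h
  comp_add : ∀ {X Y Z : C} (f : X ⟶ Y) (g h : Y ⟶ Z), f ≫ (g + h) = f ≫ g + f ≫ h
  zero_comp : ∀ {X Y Z : C} (g : Y ⟶ Z), (0 : X ⟶ Y) ≫ g = 0
  comp_zero : ∀ {X Y Z : C} (f : X ⟶ Y), f ≫ (0 : Y ⟶ Z) = 0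
  add_tensor : ∀ {X Y Z W : C} (f g : X ⟶ Y) (h : Z ⟶ W), (f + g) ⊗ₘ h = f ⊗ₘ h + g ⊗ₘ h
  tensor_add : ∀ {X Y Z W : C} (f : X ⟶ Y) (g h : Z ⟶ W), f ⊗ₘ (g + h) = f ⊗ₘ g + f ⊗ₘ h
  zero_tensor : ∀ {X Y Z W : C} (h : Z ⟶ W), (0 : X ⟶ Y) ⊗ₘ h = 0
  tensor_zero : ∀ {X Y Z W : C} (f : X ⟶ Y), f ⊗ₘ (0 : Z ⟶ W) = 0

/-- A finite additive split (f.a.s.) semiring. -/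
class FAS (R : Type) [Semiring R] : Prop where
  finite_antidiag : ∀ r : R, {q : R × R | q.1 + q.2 = r}.Finite
  add_eq_zero : ∀ {s t : R}, s + t = 0 → s = 0 ∧ t = 0
  add_eq_one : ∀ {s t : R}, s + t = 1 → (s = 1 ∧ t = 0) ∨ (s = 0 ∧ t = 1)
  add_cancel : ∀ {r s t : R}, r + s = r + t → s = t

variable {R : Type} [Semiring R]
variable {C : Type u} [Category.{v} C] [MonoidalCategory C] [SymmetricCategory C]

/-- The canonical identification `!_r A ⟶ !_s A` coming from an equality `r = s` of grades. -/
def bc (bang : R → C ⥤ C) {r s : R} (h : r = s) (A : C) :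
    (bang r).obj A ⟶ (bang s).obj A :=
  eqToHom (congrArg (fun t => (bang t).obj A) h)

variable [∀ X Y : C, AddCommMonoid (X ⟶ Y)]

/-- `(bang, p, c, d, w)` is an `R`-graded coalgebra modality. -/
structure IsGradedCoalgebraModality (bang : R → C ⥤ C)
    (p : ∀ (r s : R) (A : C), (bang (r * s)).obj A ⟶ (bang r).obj ((bang s).obj A))
    (c : ∀ (r s : R) (A : C), (bang (r + s)).obj A ⟶ (bang r).obj A ⊗ (bang s).obj A)
    (d : ∀ A : C, (bang 1).obj A ⟶ A)
    (w : ∀ A : C, (bang 0).obj A ⟶ 𝟙_ C) : Prop where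
  p_natural : ∀ (r s : R) {A B : C} (f : A ⟶ B),
    (bang (r * s)).map f ≫ p r s B = p r s A ≫ (bang r).map ((bang s).map f)
  c_natural : ∀ (r s : R) {A B : C} (f : A ⟶ B),
    (bang (r + s)).map f ≫ c r s B = c r s A ≫ ((bang r).map f ⊗ₘ (bang s).map f)
  d_natural : ∀ {A B : C} (f : A ⟶ B), (bang 1).map f ≫ d B = d A ≫ f
  w_natural : ∀ {A B : C} (f : A ⟶ B), (bang 0).map f ≫ w B = w A
  p_counit_left : ∀ (r : R) (A : C),
    p 1 r A ≫ d ((bang r).obj A) = bc bang (one_mul r) A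
  p_counit_right : ∀ (r : R) (A : C),
    p r 1 A ≫ (bang r).map (d A) = bc bang (mul_one r) A
  p_coassoc : ∀ (r s t : R) (A : C),
    p (r * s) t A ≫ p r s ((bang t).obj A)
      = bc bang (mul_assoc r s t) A ≫ p r (s * t) A ≫ (bang r).map (p s t A)
  c_coassoc : ∀ (r s t : R) (A : C),
    c (r + s) t A ≫ (c r s A ⊗ₘ 𝟙 ((bang t).obj A)) ≫ (α_ _ _ _).hom
      = bc bang (add_assoc r s t) A ≫ c r (s + t) A ≫ (𝟙 ((bang r).obj A) ⊗ₘ c s t A)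
  c_counit_right : ∀ (r : R) (A : C),
    c r 0 A ≫ (𝟙 ((bang r).obj A) ⊗ₘ w A) ≫ (ρ_ _).hom = bc bang (add_zero r) A
  c_counit_left : ∀ (r : R) (A : C),
    c 0 r A ≫ (w A ⊗ₘ 𝟙 ((bang r).obj A)) ≫ (λ_ _).hom = bc bang (zero_add r) A
  c_cocomm : ∀ (r s : R) (A : C),
    c r s A ≫ (β_ _ _).hom = bc bang (add_comm r s) A ≫ c s r A
  p_comonoid : ∀ (r s t : R) (A : C),
    p (r + s) t A ≫ c r s ((bang t).obj A)
      = bc bang (add_mul r s t) A ≫ c (r * t) (s * t) A ≫ (p r t A ⊗ₘ p s t A)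
  p_w : ∀ (r : R) (A : C),
    p 0 r A ≫ w ((bang r).obj A) = bc bang (zero_mul r) A ≫ w A

variable [DecidableEq R]

/-- `(bang, p, c, d, w, cb, wb)` is an `R`-graded additive bialgebra modality. -/
structure IsGradedAdditiveBialgebraModality (bang : R → C ⥤ C)
    (p : ∀ (r s : R) (A : C), (bang (r * s)).obj A ⟶ (bang r).obj ((bang s).obj A))
    (c : ∀ (r s : R) (A : C), (bang (r + s)).obj A ⟶ (bang r).obj A ⊗ (bang s).obj A)
    (d : ∀ A : C, (bang 1).obj A ⟶ A)
    (w : ∀ A : C, (bang 0).obj A ⟶ 𝟙_ C)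
    (cb : ∀ (r s : R) (A : C), (bang r).obj A ⊗ (bang s).obj A ⟶ (bang (r + s)).obj A)
    (wb : ∀ A : C, 𝟙_ C ⟶ (bang 0).obj A) : Prop where
  toCoalgebra : IsGradedCoalgebraModality bang p c d w
  cb_natural : ∀ (r s : R) {A B : C} (f : A ⟶ B),
    ((bang r).map f ⊗ₘ (bang s).map f) ≫ cb r s B = cb r s A ≫ (bang (r + s)).map f
  wb_natural : ∀ {A B : C} (f : A ⟶ B), wb A ≫ (bang 0).map f = wb B
  cb_assoc : ∀ (r s t : R) (A : C),
    (cb r s A ⊗ₘ 𝟙 ((bang t).obj A)) ≫ cb (r + s) t A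
      = (α_ _ _ _).hom ≫ (𝟙 ((bang r).obj A) ⊗ₘ cb s t A) ≫ cb r (s + t) A
          ≫ bc bang (add_assoc r s t).symm A
  cb_unit_left : ∀ (r : R) (A : C),
    (wb A ⊗ₘ 𝟙 ((bang r).obj A)) ≫ cb 0 r A
      = (λ_ ((bang r).obj A)).hom ≫ bc bang (zero_add r).symm A
  cb_unit_right : ∀ (r : R) (A : C),
    (𝟙 ((bang r).obj A) ⊗ₘ wb A) ≫ cb r 0 A
      = (ρ_ ((bang r).obj A)).hom ≫ bc bang (add_zero r).symm A
  cb_comm : ∀ (r s : R) (A : C),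
    (β_ _ _).hom ≫ cb s r A = cb r s A ≫ bc bang (add_comm r s) A
  bimonoid : ∀ (r s t u : R) (h : r + s = t + u) (A : C),
    cb r s A ≫ bc bang h A ≫ c t u A
      = ∑ᶠ (q : {q : (R × R) × (R × R) //
            q.1.1 + q.1.2 = r ∧ q.2.1 + q.2.2 = s ∧ q.1.1 + q.2.1 = t ∧ q.1.2 + q.2.2 = u}),
          ((bc bang q.2.1.symm A ≫ c q.1.1.1 q.1.1.2 A)
              ⊗ₘ (bc bang q.2.2.1.symm A ≫ c q.1.2.1 q.1.2.2 A))
            ≫ tensorμ _ _ _ _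
            ≫ ((cb q.1.1.1 q.1.2.1 A ≫ bc bang q.2.2.2.1 A)
                ⊗ₘ (cb q.1.1.2 q.1.2.2 A ≫ bc bang q.2.2.2.2 A))
  wb_w : ∀ A : C, wb A ≫ w A = 𝟙 (𝟙_ C)
  wb_c : ∀ A : C,
    wb A ≫ bc bang (add_zero (0 : R)).symm A ≫ c 0 0 A = (λ_ (𝟙_ C)).inv ≫ (wb A ⊗ₘ wb A)
  cb_w : ∀ A : C,
    cb 0 0 A ≫ bc bang (add_zero (0 : R)) A ≫ w A = (w A ⊗ₘ w A) ≫ (λ_ (𝟙_ C)).hom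
  cb_d : ∀ (r s : R) (h : r + s = 1) (A : C),
    cb r s A ≫ bc bang h A ≫ d A
      = (if hr : r = 0 then
          (bc bang hr A ⊗ₘ bc bang (show s = 1 by rw [hr, zero_add] at h; exact h) A)
            ≫ (w A ⊗ₘ d A) ≫ (λ_ A).hom
         else 0)
        + (if hs : s = 0 then
          (bc bang (show r = 1 by rw [hs, add_zero] at h; exact h) A ⊗ₘ bc bang hs A)
            ≫ (d A ⊗ₘ w A) ≫ (ρ_ A).hom
         else 0)
  map_add : ∀ (r : R) {A B : C} (f g : A ⟶ B),
    (bang r).map (f + g)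
      = ∑ᶠ (q : {q : R × R // q.1 + q.2 = r}),
          bc bang q.2.symm A ≫ c q.1.1 q.1.2 A
            ≫ ((bang q.1.1).map f ⊗ₘ (bang q.1.2).map g)
            ≫ cb q.1.1 q.1.2 B ≫ bc bang q.2 B
  map_zero : ∀ (r : R) {A B : C},
    (bang r).map (0 : A ⟶ B)
      = if hr : r = 0 then bc bang hr A ≫ w A ≫ wb B ≫ bc bang hr.symm B else 0


/-- The graded Seely map `χ⊗_r : !_r(A ⊕ B) ⟶ ⊕_{s+t=r} !_s A ⊗ !_t B`, defined as
`Σ_{s+t=r} c_{s,t} ; (!_s(π₀) ⊗ !_t(π₁)) ; ι_{s,t}`. -/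
noncomputable def seelyMap (bang : R → C ⥤ C)
    (c : ∀ (r s : R) (A : C), (bang (r + s)).obj A ⟶ (bang r).obj A ⊗ (bang s).obj A)
    (bp : C → C → C) (pr₀ : ∀ A B : C, bp A B ⟶ A) (pr₁ : ∀ A B : C, bp A B ⟶ B)
    (bb : R → C → C → C)
    (J : ∀ (r : R) (A B : C) (x : {q : R × R // q.1 + q.2 = r}),
      (bang x.1.1).obj A ⊗ (bang x.1.2).obj B ⟶ bb r A B)
    (r : R) (A B : C) : (bang r).obj (bp A B) ⟶ bb r A B :=
  ∑ᶠ (x : {q : R × R // q.1 + q.2 = r}),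
    bc bang x.2.symm (bp A B) ≫ c x.1.1 x.1.2 (bp A B)
      ≫ ((bang x.1.1).map (pr₀ A B) ⊗ₘ (bang x.1.2).map (pr₁ A B)) ≫ J r A B x

/-- The inverse graded Seely map `Σ_{s+t=r} π_{s,t} ; (!_s(ι₀) ⊗ !_t(ι₁)) ; c̄_{s,t}`. -/
noncomputable def seelyInv (bang : R → C ⥤ C)
    (cb : ∀ (r s : R) (A : C), (bang r).obj A ⊗ (bang s).obj A ⟶ (bang (r + s)).obj A)
    (bp : C → C → C) (in₀ : ∀ A B : C, A ⟶ bp A B) (in₁ : ∀ A B : C, B ⟶ bp A B)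
    (bb : R → C → C → C)
    (P : ∀ (r : R) (A B : C) (x : {q : R × R // q.1 + q.2 = r}),
      bb r A B ⟶ (bang x.1.1).obj A ⊗ (bang x.1.2).obj B)
    (r : R) (A B : C) : bb r A B ⟶ (bang r).obj (bp A B) :=
  ∑ᶠ (x : {q : R × R // q.1 + q.2 = r}),
    P r A B x ≫ ((bang x.1.1).map (in₀ A B) ⊗ₘ (bang x.1.2).map (in₁ A B))
      ≫ cb x.1.1 x.1.2 (bp A B) ≫ bc bang x.2 (bp A B)


/-! Because `!_r` sends a sum of maps to a convolution sum through `c` and `c̄`, the explicit map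
`Σ_{s+t=r} π_{s,t} ; (!_s(ι₀) ⊗ !_t(ι₁)) ; c̄_{s,t}` is a right inverse of `χ⊗_r` (this only uses
`π₀;ι₀ + π₁;ι₁ = 1`), so it is the given inverse. On the summand `(r, s)` followed by `!_{r+s}(∇)`,
naturality of `c̄` and `ιᵢ;∇ = 1` leave `c̄_{r,s}`. The unit case is `!_0(0) = w;w̄`. -/

instance FAS.finite_antidiagonal [FAS R] (r : R) : Finite {q : R × R // q.1 + q.2 = r} :=
  (FAS.finite_antidiag r).to_subtype

namespace AdditiveMonoidal

variable {D : Type*} [Category D] [MonoidalCategory D] [∀ X Y : D, AddCommMonoid (X ⟶ Y)]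
  [AdditiveMonoidal D]

theorem finsum_comp {ι : Type*} [Finite ι] {X Y Z : D} (f : ι → (X ⟶ Y)) (g : Y ⟶ Z) :
    (∑ᶠ i, f i) ≫ g = ∑ᶠ i, f i ≫ g :=
  (⟨⟨(· ≫ g), zero_comp g⟩, fun a b => add_comp a b g⟩ : (X ⟶ Y) →+ (X ⟶ Z)).map_finsum
    (Set.toFinite _)

theorem comp_finsum {ι : Type*} [Finite ι] {X Y Z : D} (f : X ⟶ Y) (g : ι → (Y ⟶ Z)) :
    f ≫ (∑ᶠ i, g i) = ∑ᶠ i, f ≫ g i :=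
  (⟨⟨(f ≫ ·), comp_zero f⟩, fun a b => comp_add f a b⟩ : (Y ⟶ Z) →+ (X ⟶ Z)).map_finsum
    (Set.toFinite _)

theorem inj_comp_finsum_proj_comp {ι : Type*} [Finite ι] [DecidableEq ι] {X W : D} {Y : ι → D}
    (J : ∀ i, Y i ⟶ X) (P : ∀ i, X ⟶ Y i)
    (hJP : ∀ i j, J i ≫ P j = if h : i = j then eqToHom (congrArg Y h) else 0)
    (f : ∀ i, Y i ⟶ W) (i : ι) :
    J i ≫ ∑ᶠ j, P j ≫ f j = f i := by
  rw [comp_finsum, finsum_eq_single _ i]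
  · rw [← Category.assoc, hJP, dif_pos rfl, eqToHom_refl, Category.id_comp]
  · intro j hji
    rw [← Category.assoc, hJP, dif_neg (Ne.symm hji), zero_comp]

end AdditiveMonoidal

section Seely

variable {C : Type u} [Category.{v} C] [MonoidalCategory C] [∀ X Y : C, AddCommMonoid (X ⟶ Y)]
  {bang : R → C ⥤ C}
  {cb : ∀ (r s : R) (A : C), (bang r).obj A ⊗ (bang s).obj A ⟶ (bang (r + s)).obj A}
  {bp : C → C → C} {in₀ : ∀ A B : C, A ⟶ bp A B} {in₁ : ∀ A B : C, B ⟶ bp A B}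
  {bb : R → C → C → C}
  {P : ∀ (r : R) (A B : C) (x : {q : R × R // q.1 + q.2 = r}),
    bb r A B ⟶ (bang x.1.1).obj A ⊗ (bang x.1.2).obj B}
  {J : ∀ (r : R) (A B : C) (x : {q : R × R // q.1 + q.2 = r}),
    (bang x.1.1).obj A ⊗ (bang x.1.2).obj B ⟶ bb r A B}

theorem inj_comp_seelyInv [AdditiveMonoidal C] [∀ r : R, Finite {q : R × R // q.1 + q.2 = r}]
    {r : R} {A B : C}
    (hJP : ∀ x y : {q : R × R // q.1 + q.2 = r},
      J r A B x ≫ P r A B y = if hxy : x = y then eqToHom (by rw [hxy]) else 0)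
    (x : {q : R × R // q.1 + q.2 = r}) :
    J r A B x ≫ seelyInv bang cb bp in₀ in₁ bb P r A B
      = ((bang x.1.1).map (in₀ A B) ⊗ₘ (bang x.1.2).map (in₁ A B))
          ≫ cb x.1.1 x.1.2 (bp A B) ≫ bc bang x.2 (bp A B) :=
  AdditiveMonoidal.inj_comp_finsum_proj_comp
    (Y := fun y => (bang y.1.1).obj A ⊗ (bang y.1.2).obj B) _ _ hJP _ x

namespace IsGradedAdditiveBialgebraModality

variable [SymmetricCategory C]
  {p : ∀ (r s : R) (A : C), (bang (r * s)).obj A ⟶ (bang r).obj ((bang s).obj A)}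
  {c : ∀ (r s : R) (A : C), (bang (r + s)).obj A ⟶ (bang r).obj A ⊗ (bang s).obj A}
  {d : ∀ A : C, (bang 1).obj A ⟶ A} {w : ∀ A : C, (bang 0).obj A ⟶ 𝟙_ C}
  {wb : ∀ A : C, 𝟙_ C ⟶ (bang 0).obj A}

theorem map_zero_zero (hmod : IsGradedAdditiveBialgebraModality bang p c d w cb wb) (A B : C) :
    (bang 0).map (0 : A ⟶ B) = w A ≫ wb B := by
  simp only [hmod.map_zero, dif_pos, bc, eqToHom_refl, Category.id_comp, Category.comp_id]

theorem seelyMap_comp_seelyInv [AdditiveMonoidal C] [∀ r : R, Finite {q : R × R // q.1 + q.2 = r}]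
    (hmod : IsGradedAdditiveBialgebraModality bang p c d w cb wb)
    {pr₀ : ∀ A B : C, bp A B ⟶ A} {pr₁ : ∀ A B : C, bp A B ⟶ B} {r : R} {A B : C}
    (hbp : pr₀ A B ≫ in₀ A B + pr₁ A B ≫ in₁ A B = 𝟙 (bp A B))
    (hJP : ∀ x y : {q : R × R // q.1 + q.2 = r},
      J r A B x ≫ P r A B y = if hxy : x = y then eqToHom (by rw [hxy]) else 0) :
    seelyMap bang c bp pr₀ pr₁ bb J r A B ≫ seelyInv bang cb bp in₀ in₁ bb P r A B
      = 𝟙 ((bang r).obj (bp A B)) := by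
  rw [← (bang r).map_id, ← hbp, hmod.map_add, seelyMap, AdditiveMonoidal.finsum_comp]
  refine finsum_congr fun x => ?_
  simp only [Category.assoc, inj_comp_seelyInv hJP, Functor.map_comp,
    tensorHom_comp_tensorHom_assoc]

theorem inj_comp_seelyInv_comp_map_codiag [AdditiveMonoidal C]
    [∀ r : R, Finite {q : R × R // q.1 + q.2 = r}]
    (hmod : IsGradedAdditiveBialgebraModality bang p c d w cb wb) {r s : R} {A : C}
    (codiag : bp A A ⟶ A) (h₀ : in₀ A A ≫ codiag = 𝟙 A) (h₁ : in₁ A A ≫ codiag = 𝟙 A)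
    (hJP : ∀ x y : {q : R × R // q.1 + q.2 = r + s},
      J (r + s) A A x ≫ P (r + s) A A y = if hxy : x = y then eqToHom (by rw [hxy]) else 0) :
    J (r + s) A A ⟨(r, s), rfl⟩ ≫ seelyInv bang cb bp in₀ in₁ bb P (r + s) A A
        ≫ (bang (r + s)).map codiag
      = cb r s A := by
  rw [← Category.assoc, inj_comp_seelyInv hJP, bc, eqToHom_refl, Category.comp_id,
    Category.assoc, ← hmod.cb_natural, tensorHom_comp_tensorHom_assoc, ← Functor.map_comp,
    ← Functor.map_comp, h₀, h₁, CategoryTheory.Functor.map_id, CategoryTheory.Functor.map_id,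
    id_tensorHom_id, Category.id_comp]

end IsGradedAdditiveBialgebraModality

end Seely

/-- **The Seely constructions are mutually inverse.** Let `R` be a f.a.s. semiring and
`(bang, p, c, d, w, cb, wb)` an `R`-graded additive bialgebra modality on an additive
symmetric monoidal category with finite biproducts and a zero object `Z`, and let
`χ⊗_r := Σ_{s+t=r} c_{s,t};(!_s(π₀)⊗!_t(π₁));ι_{s,t}` and `χI := w` be the induced
graded Seely isomorphisms (with two-sided inverses `χinv` and `χIinv`). Then applying
the converse construction to these isomorphisms recovers the original structure:
`ι_{r,s} ; (χ⊗_{r+s})⁻¹ ; !_{r+s}(∇) = c̄_{r,s}` and `(χI)⁻¹ ; !_0(0) = w̄`. -/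
theorem graded_seely_roundtrip
    {R : Type} [Semiring R] [DecidableEq R] [FAS R]
    {C : Type u} [Category.{v} C] [MonoidalCategory C] [SymmetricCategory C]
    [∀ X Y : C, AddCommMonoid (X ⟶ Y)] [AdditiveMonoidal C]
    (bang : R → C ⥤ C)
    (p : ∀ (r s : R) (A : C), (bang (r * s)).obj A ⟶ (bang r).obj ((bang s).obj A))
    (c : ∀ (r s : R) (A : C), (bang (r + s)).obj A ⟶ (bang r).obj A ⊗ (bang s).obj A)
    (d : ∀ A : C, (bang 1).obj A ⟶ A)
    (w : ∀ A : C, (bang 0).obj A ⟶ 𝟙_ C)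
    (cb : ∀ (r s : R) (A : C), (bang r).obj A ⊗ (bang s).obj A ⟶ (bang (r + s)).obj A)
    (wb : ∀ A : C, 𝟙_ C ⟶ (bang 0).obj A)
    (hmod : IsGradedAdditiveBialgebraModality bang p c d w cb wb)
    -- binary biproducts
    (bp : C → C → C)
    (pr₀ : ∀ A B : C, bp A B ⟶ A) (pr₁ : ∀ A B : C, bp A B ⟶ B)
    (in₀ : ∀ A B : C, A ⟶ bp A B) (in₁ : ∀ A B : C, B ⟶ bp A B)
    (h00 : ∀ A B : C, in₀ A B ≫ pr₀ A B = 𝟙 A) (h01 : ∀ A B : C, in₀ A B ≫ pr₁ A B = 0)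
    (h10 : ∀ A B : C, in₁ A B ≫ pr₀ A B = 0) (h11 : ∀ A B : C, in₁ A B ≫ pr₁ A B = 𝟙 B)
    (hbp : ∀ A B : C, pr₀ A B ≫ in₀ A B + pr₁ A B ≫ in₁ A B = 𝟙 (bp A B))
    -- a zero object
    (Z : C) (hZ : Limits.IsZero Z)
    -- biproducts indexed by the antidiagonal of r
    (bb : R → C → C → C)
    (P : ∀ (r : R) (A B : C) (x : {q : R × R // q.1 + q.2 = r}),
      bb r A B ⟶ (bang x.1.1).obj A ⊗ (bang x.1.2).obj B)
    (J : ∀ (r : R) (A B : C) (x : {q : R × R // q.1 + q.2 = r}),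
      (bang x.1.1).obj A ⊗ (bang x.1.2).obj B ⟶ bb r A B)
    (hJP : ∀ (r : R) (A B : C) (x y : {q : R × R // q.1 + q.2 = r}),
      J r A B x ≫ P r A B y = if hxy : x = y then eqToHom (by rw [hxy]) else 0)
    (hPJ : ∀ (r : R) (A B : C),
      ∑ᶠ (x : {q : R × R // q.1 + q.2 = r}), P r A B x ≫ J r A B x = 𝟙 (bb r A B))
    -- two-sided inverses of the induced Seely isomorphisms
    (χinv : ∀ (r : R) (A B : C), bb r A B ⟶ (bang r).obj (bp A B))
    (hχ₁ : ∀ (r : R) (A B : C),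
      seelyMap bang c bp pr₀ pr₁ bb J r A B ≫ χinv r A B = 𝟙 ((bang r).obj (bp A B)))
    (hχ₂ : ∀ (r : R) (A B : C),
      χinv r A B ≫ seelyMap bang c bp pr₀ pr₁ bb J r A B = 𝟙 (bb r A B))
    (χIinv : 𝟙_ C ⟶ (bang 0).obj Z)
    (hχI₁ : w Z ≫ χIinv = 𝟙 ((bang 0).obj Z))
    (hχI₂ : χIinv ≫ w Z = 𝟙 (𝟙_ C)) :
    (∀ (r s : R) (A : C),
      J (r + s) A A ⟨(r, s), rfl⟩ ≫ χinv (r + s) A A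
          ≫ (bang (r + s)).map (pr₀ A A + pr₁ A A)
        = cb r s A)
    ∧ (∀ A : C, χIinv ≫ (bang 0).map (0 : Z ⟶ A) = wb A) := by
  have hχinv : ∀ r A B, χinv r A B = seelyInv bang cb bp in₀ in₁ bb P r A B := fun r A B =>
    calc χinv r A B
        = χinv r A B ≫ seelyMap bang c bp pr₀ pr₁ bb J r A B
            ≫ seelyInv bang cb bp in₀ in₁ bb P r A B := by
          rw [hmod.seelyMap_comp_seelyInv (hbp A B) (hJP r A B), Category.comp_id]
      _ = seelyInv bang cb bp in₀ in₁ bb P r A B := by rw [← Category.assoc, hχ₂, Category.id_comp]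
  refine ⟨fun r s A => ?_, fun A => ?_⟩
  · rw [hχinv]
    refine hmod.inj_comp_seelyInv_comp_map_codiag _ ?_ ?_ (hJP (r + s) A A)
    · rw [AdditiveMonoidal.comp_add, h00, h01, add_zero]
    · rw [AdditiveMonoidal.comp_add, h10, h11, zero_add]
  · rw [hmod.map_zero_zero, ← Category.assoc, hχI₂, Category.id_comp]
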